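/- With A and π_r as above, the lowest weight vector e_0 of π_r satisfies F e_0 = 0 and K e_0 = q^{-r} e_0, and every irreducible admissible *-representation of A in which K has positive spectrum and F acts locally finitely is determined up to unitary equivalence by its lowest weight q^{-r}; distinct r give inequivalent representations. -/

import Mathlib

/-!
A lowest weight vector `v` of weight `m` generates the representation. The vectors `F*ⁿ v` are
`K`-eigenvectors with the pairwise distinct eigenvalues `q^{2n} m`, and the relation
`F*F − q²FF* = (1 + K⁻²)/(q − q⁻¹)` gives `F (F*ⁿ⁺¹ v) = λₙ₊₁ F*ⁿ v` with coefficients `λ` depending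
only on `q` and `m`. Since `q − q⁻¹ < 0` the `λₙ₊₁` are positive, so no `F*ⁿ v` vanishes, and by
irreducibility they form a basis. Hence `F*ⁿ v₁ ↦ F*ⁿ v₂` intertwines two representations with the
same lowest weight, and it is unitary once `‖v₂‖ = ‖v₁‖`, because adjointness of `F` and `F*`
determines all inner products from `⟨v, v⟩`. Conversely every weight of `K` is some `q^{2n} m`, so
two lowest weights `m, m'` satisfy `m' = q^{2n} m` and `m = q^{2n'} m'`, forcing `m = m'`.
-/

noncomputable section

open Finsupp

variable (q : ℝ)

/-- The diagonal operator `K e_n = q^{-r+2n} e_n` on `ℂ[ℕ]`. -/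
def Kop (r : ℝ) : (ℕ →₀ ℂ) →ₗ[ℂ] (ℕ →₀ ℂ) :=
  Finsupp.lsum ℂ fun n => LinearMap.toSpanSingleton ℂ _
    (((q ^ (-r + 2 * (n : ℝ)) : ℝ) : ℂ) • Finsupp.single n 1)

/-- The coefficient in the action of `F` in the representation `π_r`. -/
def Fcoef (r : ℝ) (n : ℕ) : ℝ :=
  q ^ (-(n : ℝ)) * Real.sqrt ((1 - q ^ (2 * (n : ℝ))) * (1 + q ^ (2 * r + 2 - 2 * (n : ℝ)))) /
    (q ^ ((1 : ℝ) / 2) * (q⁻¹ - q))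

/-- The lowering operator `F e_n = c_n e_{n-1}` (with `c_0 = 0`). -/
def Fop (r : ℝ) : (ℕ →₀ ℂ) →ₗ[ℂ] (ℕ →₀ ℂ) :=
  Finsupp.lsum ℂ fun n => LinearMap.toSpanSingleton ℂ _
    (((Fcoef q r n : ℝ) : ℂ) • Finsupp.single (n - 1) 1)

/-- An admissible irreducible `*`-representation of the universal `*`-algebra `A`
generated by `F` and a positive invertible self-adjoint `K` with relations
`KF = q⁻²FK`, `KF* = q²F*K`, `F*F − q²FF* = (1 + K⁻²)/(q − q⁻¹)`: a pre-Hilbert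
ℂ-module with operators `K, K⁻¹, F, F*` satisfying the relations and adjointness,
`K` acting semisimply with positive eigenvalues, `F` acting locally finitely,
with no proper invariant subspaces. -/
def IsAdmRep (V : Type*) [AddCommGroup V] [Module ℂ V] (inner : V → V → ℂ)
    (K Kinv F Fs : V →ₗ[ℂ] V) : Prop :=
  (∀ u v w : V, inner u (v + w) = inner u v + inner u w) ∧
  (∀ (c : ℂ) (u v : V), inner u (c • v) = c * inner u v) ∧
  (∀ u v : V, starRingEnd ℂ (inner u v) = inner v u) ∧
  (∀ v : V, v ≠ 0 → 0 < (inner v v).re ∧ (inner v v).im = 0) ∧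
  (∀ v : V, K (F v) = ((q : ℂ) ^ (-2 : ℤ)) • F (K v)) ∧
  (∀ v : V, K (Fs v) = ((q : ℂ) ^ 2) • Fs (K v)) ∧
  (∀ v : V, Fs (F v) - ((q : ℂ) ^ 2) • F (Fs v) =
    (((q - q⁻¹ : ℝ)⁻¹ : ℝ) : ℂ) • (v + Kinv (Kinv v))) ∧
  (∀ v : V, K (Kinv v) = v) ∧ (∀ v : V, Kinv (K v) = v) ∧
  (∀ v w : V, inner v (F w) = inner (Fs v) w) ∧
  (∀ v w : V, inner v (K w) = inner (K v) w) ∧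
  ((⨆ c : {c : ℝ // 0 < c}, Module.End.eigenspace K ((c : ℝ) : ℂ)) = ⊤) ∧
  (∀ v : V, ∃ W : Submodule ℂ V, FiniteDimensional ℂ W ∧ v ∈ W ∧ ∀ w ∈ W, F w ∈ W) ∧
  (∃ v : V, v ≠ 0) ∧
  (∀ W : Submodule ℂ V,
    (∀ w ∈ W, K w ∈ W ∧ Kinv w ∈ W ∧ F w ∈ W ∧ Fs w ∈ W) → W = ⊥ ∨ W = ⊤)

theorem Module.End.pow_succ_apply {R M : Type*} [Semiring R] [AddCommMonoid M] [Module R M]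
    (f : Module.End R M) (n : ℕ) (x : M) : (f ^ (n + 1)) x = f ((f ^ n) x) := by
  rw [pow_succ', Module.End.mul_apply]

theorem Fop_single_zero (r : ℝ) : Fop q r (Finsupp.single 0 1) = 0 := by
  simp [Fop, Fcoef]

theorem Kop_single_zero (r : ℝ) :
    Kop q r (Finsupp.single 0 1) = (((q ^ (-r) : ℝ) : ℂ)) • Finsupp.single 0 1 := by
  simp [Kop]

section LowestWeight

variable {q}

/-- `F (F*ⁿ v) = lowerCoef q m n • F*ⁿ⁻¹ v` for a lowest weight vector `v` of weight `m`. -/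
def lowerCoef (q m : ℝ) : ℕ → ℝ
  | 0 => 0
  | n + 1 => (q ^ 2)⁻¹ * (lowerCoef q m n - (q - q⁻¹)⁻¹ * (1 + ((q ^ (2 * n) * m) ^ 2)⁻¹))

theorem lowerCoef_succ_pos (hq0 : 0 < q) (hq1 : q < 1) (m : ℝ) :
    ∀ n, 0 < lowerCoef q m (n + 1)
  | n => by
    have hc : (q - q⁻¹)⁻¹ < 0 := inv_neg''.mpr (by linarith [(one_lt_inv₀ hq0).mpr hq1])
    have hL : 0 ≤ lowerCoef q m n := by
      cases n with
      | zero => exact le_rfl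
      | succ k => exact (lowerCoef_succ_pos hq0 hq1 m k).le
    have hpos : 0 < 1 + ((q ^ (2 * n) * m) ^ 2)⁻¹ := by positivity
    rw [lowerCoef]
    exact mul_pos (by positivity) (by linarith [mul_neg_of_neg_of_pos hc hpos])

theorem weight_pow_injective (hq0 : 0 < q) (hq1 : q < 1) {m : ℝ} (hm : m ≠ 0) :
    Function.Injective fun n : ℕ => ((q ^ (2 * n) * m : ℝ) : ℂ) := by
  intro i j hij
  have hpow : q ^ (2 * i) = q ^ (2 * j) :=
    mul_right_cancel₀ hm (Complex.ofReal_injective hij)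
  have := (pow_right_strictAnti₀ hq0 hq1).injective hpow
  omega

variable {V : Type*} [AddCommGroup V] [Module ℂ V] {ip : V → V → ℂ} {K Kinv F Fs : V →ₗ[ℂ] V}

structure IsLowestWeightVector (K F : V →ₗ[ℂ] V) (μ : ℂ) (v : V) : Prop where
  ne_zero : v ≠ 0
  F_eq_zero : F v = 0
  K_eq_smul : K v = μ • v

namespace IsAdmRep

theorem inner_add_right (h : IsAdmRep q V ip K Kinv F Fs) (u v w : V) :
    ip u (v + w) = ip u v + ip u w :=
  h.1 u v w

theorem inner_smul_right (h : IsAdmRep q V ip K Kinv F Fs) (c : ℂ) (u v : V) :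
    ip u (c • v) = c * ip u v :=
  h.2.1 c u v

theorem conj_inner (h : IsAdmRep q V ip K Kinv F Fs) (u v : V) :
    starRingEnd ℂ (ip u v) = ip v u :=
  h.2.2.1 u v

theorem inner_self_re_pos (h : IsAdmRep q V ip K Kinv F Fs) {v : V} (hv : v ≠ 0) :
    0 < (ip v v).re :=
  (h.2.2.2.1 v hv).1

theorem inner_self_im (h : IsAdmRep q V ip K Kinv F Fs) {v : V} (hv : v ≠ 0) :
    (ip v v).im = 0 :=
  (h.2.2.2.1 v hv).2

theorem K_Fs (h : IsAdmRep q V ip K Kinv F Fs) (v : V) : K (Fs v) = ((q : ℂ) ^ 2) • Fs (K v) :=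
  h.2.2.2.2.2.1 v

theorem Fs_F_sub_F_Fs (h : IsAdmRep q V ip K Kinv F Fs) (v : V) :
    Fs (F v) - ((q : ℂ) ^ 2) • F (Fs v) = (((q - q⁻¹ : ℝ)⁻¹ : ℝ) : ℂ) • (v + Kinv (Kinv v)) :=
  h.2.2.2.2.2.2.1 v

theorem Kinv_K (h : IsAdmRep q V ip K Kinv F Fs) (v : V) : Kinv (K v) = v :=
  h.2.2.2.2.2.2.2.2.1 v

theorem inner_F_right (h : IsAdmRep q V ip K Kinv F Fs) (v w : V) : ip v (F w) = ip (Fs v) w :=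
  h.2.2.2.2.2.2.2.2.2.1 v w

theorem inner_K_right (h : IsAdmRep q V ip K Kinv F Fs) (v w : V) : ip v (K w) = ip (K v) w :=
  h.2.2.2.2.2.2.2.2.2.2.1 v w

theorem eq_bot_or_eq_top (h : IsAdmRep q V ip K Kinv F Fs) (W : Submodule ℂ V)
    (hW : ∀ w ∈ W, K w ∈ W ∧ Kinv w ∈ W ∧ F w ∈ W ∧ Fs w ∈ W) : W = ⊥ ∨ W = ⊤ :=
  h.2.2.2.2.2.2.2.2.2.2.2.2.2.2 W hW

def innerRight (h : IsAdmRep q V ip K Kinv F Fs) (u : V) : V →ₗ[ℂ] ℂ where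
  toFun := ip u
  map_add' := h.inner_add_right u
  map_smul' c v := h.inner_smul_right c u v

@[simp]
theorem innerRight_apply (h : IsAdmRep q V ip K Kinv F Fs) (u v : V) : h.innerRight u v = ip u v :=
  rfl

theorem inner_zero_left (h : IsAdmRep q V ip K Kinv F Fs) (u : V) : ip 0 u = 0 := by
  rw [← h.conj_inner, ← h.innerRight_apply, map_zero, map_zero]

theorem inner_smul_left (h : IsAdmRep q V ip K Kinv F Fs) (c : ℂ) (u v : V) :
    ip (c • u) v = starRingEnd ℂ c * ip u v := by
  rw [← h.conj_inner, h.inner_smul_right, map_mul, h.conj_inner]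

theorem inner_Fs_right (h : IsAdmRep q V ip K Kinv F Fs) (v w : V) : ip v (Fs w) = ip (F v) w := by
  rw [← h.conj_inner, ← h.inner_F_right, h.conj_inner]

theorem ofReal_inner_self_re (h : IsAdmRep q V ip K Kinv F Fs) {v : V} (hv : v ≠ 0) :
    (((ip v v).re : ℝ) : ℂ) = ip v v :=
  Complex.ext rfl (by simp [h.inner_self_im hv])

theorem Kinv_eq_inv_smul (h : IsAdmRep q V ip K Kinv F Fs) {v : V} {μ : ℂ} (hμ : μ ≠ 0)
    (hKv : K v = μ • v) : Kinv v = μ⁻¹ • v := by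
  rw [← h.Kinv_K (μ⁻¹ • v), map_smul, hKv, smul_smul, inv_mul_cancel₀ hμ, one_smul]

theorem eigenvalue_ne_zero (h : IsAdmRep q V ip K Kinv F Fs) {v : V} {μ : ℂ} (hv : v ≠ 0)
    (hKv : K v = μ • v) : μ ≠ 0 := by
  rintro rfl
  rw [zero_smul] at hKv
  exact hv (by rw [← h.Kinv_K v, hKv, map_zero])

theorem ofReal_re_eigenvalue (h : IsAdmRep q V ip K Kinv F Fs) {v : V} {μ : ℂ} (hv : v ≠ 0)
    (hKv : K v = μ • v) : ((μ.re : ℝ) : ℂ) = μ := by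
  have hself := h.inner_K_right v v
  rw [hKv, h.inner_smul_right, h.inner_smul_left] at hself
  have hip : ip v v ≠ 0 := fun h0 => (h.inner_self_re_pos hv).ne' (by rw [h0, Complex.zero_re])
  exact Complex.conj_eq_iff_re.mp (mul_right_cancel₀ hip hself).symm

theorem exists_smul_inner_self_eq (h : IsAdmRep q V ip K Kinv F Fs) {v : V} (hv : v ≠ 0)
    {r : ℝ} (hr : 0 < r) : ∃ c : ℂ, c ≠ 0 ∧ ip (c • v) (c • v) = r := by
  have hv' := h.inner_self_re_pos hv
  set s := Real.sqrt (r / (ip v v).re)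
  have hs : 0 < s := Real.sqrt_pos.mpr (div_pos hr hv')
  refine ⟨s, by exact_mod_cast hs.ne', ?_⟩
  rw [h.inner_smul_left, h.inner_smul_right, Complex.conj_ofReal, ← h.ofReal_inner_self_re hv,
    ← mul_assoc, ← Complex.ofReal_mul, ← Complex.ofReal_mul, Real.mul_self_sqrt (div_pos hr hv').le,
    div_mul_cancel₀ _ hv'.ne']

theorem K_pow_Fs_apply (h : IsAdmRep q V ip K Kinv F Fs) {m : ℝ} {v : V} (hKv : K v = (m : ℂ) • v)
    (n : ℕ) :
    K ((Fs ^ n) v) = ((q ^ (2 * n) * m : ℝ) : ℂ) • (Fs ^ n) v := by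
  induction n with
  | zero => simpa using hKv
  | succ n ih =>
    rw [Module.End.pow_succ_apply, h.K_Fs, ih, map_smul, smul_smul]
    push_cast
    ring_nf

end IsAdmRep

namespace IsLowestWeightVector

variable {m : ℝ} {v : V}

theorem smul {μ : ℂ} (hv : IsLowestWeightVector K F μ v) {c : ℂ} (hc : c ≠ 0) :
    IsLowestWeightVector K F μ (c • v) where
  ne_zero := smul_ne_zero hc hv.ne_zero
  F_eq_zero := by rw [map_smul, hv.F_eq_zero, smul_zero]
  K_eq_smul := by rw [map_smul, hv.K_eq_smul, smul_comm]

theorem map {V₂ : Type*} [AddCommGroup V₂] [Module ℂ V₂] {K₂ F₂ : V₂ →ₗ[ℂ] V₂}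
    {μ : ℂ} (hv : IsLowestWeightVector K F μ v) (U : V ≃ₗ[ℂ] V₂)
    (hUK : ∀ x, U (K x) = K₂ (U x)) (hUF : ∀ x, U (F x) = F₂ (U x)) :
    IsLowestWeightVector K₂ F₂ μ (U v) where
  ne_zero := (U.map_ne_zero_iff).mpr hv.ne_zero
  F_eq_zero := by rw [← hUF, hv.F_eq_zero, map_zero]
  K_eq_smul := by rw [← hUK, hv.K_eq_smul, map_smul]

theorem F_pow_Fs_apply (hq : q ≠ 0) (h : IsAdmRep q V ip K Kinv F Fs)
    (hv : IsLowestWeightVector K F m v) (n : ℕ) : F ((Fs ^ n) v) = (lowerCoef q m n : ℂ) • (Fs ^ (n - 1)) v := by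
  have hm : (m : ℂ) ≠ 0 := h.eigenvalue_ne_zero hv.ne_zero hv.K_eq_smul
  induction n with
  | zero => simp [lowerCoef, hv.F_eq_zero]
  | succ n ih =>
    have hμ : ((q ^ (2 * n) * m : ℝ) : ℂ) ≠ 0 := by
      push_cast
      exact mul_ne_zero (pow_ne_zero _ (by exact_mod_cast hq)) hm
    have hFsF : Fs (F ((Fs ^ n) v)) = (lowerCoef q m n : ℂ) • (Fs ^ n) v := by
      rw [ih, map_smul]
      cases n with
      | zero => simp [lowerCoef]
      | succ k => rw [Nat.add_sub_cancel, ← Module.End.pow_succ_apply]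
    have hrel := h.Fs_F_sub_F_Fs ((Fs ^ n) v)
    rw [hFsF, h.Kinv_eq_inv_smul hμ (h.K_pow_Fs_apply hv.K_eq_smul n), map_smul,
      h.Kinv_eq_inv_smul hμ (h.K_pow_Fs_apply hv.K_eq_smul n), smul_smul,
      ← Module.End.pow_succ_apply] at hrel
    have hq2 : (q : ℂ) ^ 2 ≠ 0 := pow_ne_zero _ (by exact_mod_cast hq)
    have hF : (q : ℂ) ^ 2 • F ((Fs ^ (n + 1)) v) = (lowerCoef q m n : ℂ) • (Fs ^ n) v -
        (((q - q⁻¹ : ℝ)⁻¹ : ℝ) : ℂ) • ((Fs ^ n) v +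
          ((((q ^ (2 * n) * m : ℝ) : ℂ))⁻¹ * (((q ^ (2 * n) * m : ℝ) : ℂ))⁻¹) • (Fs ^ n) v) := by
      rw [← hrel]; abel
    rw [Nat.add_sub_cancel, ← inv_smul_smul₀ hq2 (F _), hF, lowerCoef]
    push_cast
    module

theorem pow_Fs_apply_ne_zero (hq0 : 0 < q) (hq1 : q < 1) (h : IsAdmRep q V ip K Kinv F Fs)
    (hv : IsLowestWeightVector K F m v) (n : ℕ) : (Fs ^ n) v ≠ 0 := by
  induction n with
  | zero => exact hv.ne_zero
  | succ n ih =>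
    intro h0
    have hF := F_pow_Fs_apply hq0.ne' h hv (n + 1)
    rw [h0, map_zero, Nat.add_sub_cancel, eq_comm, smul_eq_zero] at hF
    exact hF.elim (by exact_mod_cast (lowerCoef_succ_pos hq0 hq1 m n).ne') ih

theorem linearIndependent_pow_Fs_apply (hq0 : 0 < q) (hq1 : q < 1)
    (h : IsAdmRep q V ip K Kinv F Fs) (hv : IsLowestWeightVector K F m v) :
    LinearIndependent ℂ fun n : ℕ => (Fs ^ n) v := by
  have hm : m ≠ 0 := by exact_mod_cast h.eigenvalue_ne_zero hv.ne_zero hv.K_eq_smul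
  exact Module.End.eigenvectors_linearIndependent' K _ (weight_pow_injective hq0 hq1 hm) _ fun n =>
    ⟨Module.End.mem_eigenspace_iff.mpr (h.K_pow_Fs_apply hv.K_eq_smul n),
      pow_Fs_apply_ne_zero hq0 hq1 h hv n⟩

theorem span_pow_Fs_apply_eq_top (hq0 : 0 < q) (hq1 : q < 1) (h : IsAdmRep q V ip K Kinv F Fs)
    (hv : IsLowestWeightVector K F m v) :
    Submodule.span ℂ (Set.range fun n : ℕ => (Fs ^ n) v) = ⊤ := by
  set W := Submodule.span ℂ (Set.range fun n : ℕ => (Fs ^ n) v) with hW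
  have hmem (n : ℕ) : (Fs ^ n) v ∈ W := Submodule.subset_span (Set.mem_range_self n)
  have hinv (T : V →ₗ[ℂ] V) (hT : ∀ n, T ((Fs ^ n) v) ∈ W) : W ≤ W.comap T := by
    rw [hW, Submodule.span_le, Set.range_subset_iff]
    exact hT
  have hK (n : ℕ) := h.K_pow_Fs_apply hv.K_eq_smul n
  have hμ (n : ℕ) : ((q ^ (2 * n) * m : ℝ) : ℂ) ≠ 0 :=
    h.eigenvalue_ne_zero (pow_Fs_apply_ne_zero hq0 hq1 h hv n) (hK n)
  refine (h.eq_bot_or_eq_top W fun w hw => ⟨hinv K (fun n => ?_) hw, hinv Kinv (fun n => ?_) hw,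
    hinv F (fun n => ?_) hw, hinv Fs (fun n => ?_) hw⟩).resolve_left fun hbot => hv.ne_zero ?_
  · rw [hK]
    exact W.smul_mem _ (hmem n)
  · rw [h.Kinv_eq_inv_smul (hμ n) (hK n)]
    exact W.smul_mem _ (hmem n)
  · rw [F_pow_Fs_apply hq0.ne' h hv]
    exact W.smul_mem _ (hmem _)
  · rw [← Module.End.pow_succ_apply]
    exact hmem _
  · simpa [hbot] using hmem 0

def basis (hq0 : 0 < q) (hq1 : q < 1) (h : IsAdmRep q V ip K Kinv F Fs)
    (hv : IsLowestWeightVector K F m v) : Module.Basis ℕ ℂ V :=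
  .mk (linearIndependent_pow_Fs_apply hq0 hq1 h hv) (span_pow_Fs_apply_eq_top hq0 hq1 h hv).ge

theorem basis_apply (hq0 : 0 < q) (hq1 : q < 1) (h : IsAdmRep q V ip K Kinv F Fs)
    (hv : IsLowestWeightVector K F m v) (n : ℕ) : hv.basis hq0 hq1 h n = (Fs ^ n) v :=
  Module.Basis.mk_apply _ _ n

theorem exists_eq_of_K_apply_eq_smul (hq0 : 0 < q) (hq1 : q < 1)
    (h : IsAdmRep q V ip K Kinv F Fs) (hv : IsLowestWeightVector K F m v) {w : V} {ν : ℂ}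
    (hw : w ≠ 0) (hKw : K w = ν • w) : ∃ n : ℕ, ν = ((q ^ (2 * n) * m : ℝ) : ℂ) := by
  -- eigenspaces of distinct eigenvalues are independent, and those of the `q^{2n} m` span `V`
  by_contra! hν
  have htop : ⊤ ≤ ⨆ μ ∈ ({ν}ᶜ : Set ℂ), Module.End.eigenspace K μ := by
    rw [← span_pow_Fs_apply_eq_top hq0 hq1 h hv, Submodule.span_le, Set.range_subset_iff]
    exact fun n => le_biSup (Module.End.eigenspace K) (hν n).symm
      (Module.End.mem_eigenspace_iff.mpr (h.K_pow_Fs_apply hv.K_eq_smul n))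
  have hdisj := (Module.End.eigenspaces_iSupIndep K).disjoint_biSup
    (Set.notMem_compl_iff.mpr (Set.mem_singleton ν))
  exact hw (Submodule.disjoint_def.mp hdisj w (Module.End.mem_eigenspace_iff.mpr hKw)
    (htop Submodule.mem_top))


theorem weight_eq (hq0 : 0 < q) (hq1 : q < 1)
    (h : IsAdmRep q V ip K Kinv F Fs) {μ ν : ℂ} {w : V} (hv : IsLowestWeightVector K F μ v)
    (hw : IsLowestWeightVector K F ν w) : μ = ν := by
  obtain ⟨m, rfl⟩ : ∃ m : ℝ, (m : ℂ) = μ := ⟨_, h.ofReal_re_eigenvalue hv.ne_zero hv.K_eq_smul⟩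
  have hm : m ≠ 0 := by exact_mod_cast h.eigenvalue_ne_zero hv.ne_zero hv.K_eq_smul
  obtain ⟨n, rfl⟩ := hv.exists_eq_of_K_apply_eq_smul hq0 hq1 h hw.ne_zero hw.K_eq_smul
  obtain ⟨k, hk⟩ := hw.exists_eq_of_K_apply_eq_smul hq0 hq1 h hv.ne_zero hv.K_eq_smul
  have hpow : q ^ (2 * (k + n)) = q ^ 0 := by
    have := Complex.ofReal_injective hk
    rw [← mul_assoc, ← pow_add, ← mul_add] at this
    simpa using mul_right_cancel₀ hm (this.symm.trans (one_mul m).symm)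
  obtain rfl : n = 0 := by have := (pow_right_strictAnti₀ hq0 hq1).injective hpow; omega
  simp

end IsLowestWeightVector

section Intertwiners

variable {V₁ V₂ : Type*} [AddCommGroup V₁] [Module ℂ V₁] [AddCommGroup V₂] [Module ℂ V₂]
  {ip₁ : V₁ → V₁ → ℂ} {ip₂ : V₂ → V₂ → ℂ}
  {K₁ Kinv₁ F₁ Fs₁ : V₁ →ₗ[ℂ] V₁} {K₂ Kinv₂ F₂ Fs₂ : V₂ →ₗ[ℂ] V₂}

theorem inner_map_map_of_intertwines (h₁ : IsAdmRep q V₁ ip₁ K₁ Kinv₁ F₁ Fs₁)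
    (h₂ : IsAdmRep q V₂ ip₂ K₂ Kinv₂ F₂ Fs₂) {v₁ : V₁}
    (hspan : Submodule.span ℂ (Set.range fun n : ℕ => (Fs₁ ^ n) v₁) = ⊤) (hF₁ : F₁ v₁ = 0)
    (U : V₁ →ₗ[ℂ] V₂) (hUF : ∀ x, U (F₁ x) = F₂ (U x)) (hUFs : ∀ x, U (Fs₁ x) = Fs₂ (U x))
    (hUv : ip₂ (U v₁) (U v₁) = ip₁ v₁ v₁) (x y : V₁) : ip₂ (U x) (U y) = ip₁ x y := by
  -- `⟨v₁, F* y⟩ = ⟨F v₁, y⟩ = 0`, and likewise in `V₂`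
  have hv (y : V₁) : ip₂ (U v₁) (U y) = ip₁ v₁ y := by
    refine LinearMap.congr_fun (LinearMap.ext_on_range hspan
      (f := h₂.innerRight (U v₁) ∘ₗ U) (g := h₁.innerRight v₁) fun n => ?_) y
    cases n with
    | zero => simpa using hUv
    | succ n =>
      simp only [LinearMap.comp_apply, IsAdmRep.innerRight_apply, Module.End.pow_succ_apply, hUFs,
        h₁.inner_Fs_right, h₂.inner_Fs_right, ← hUF, hF₁, map_zero, h₁.inner_zero_left,
        h₂.inner_zero_left]
  have he (n : ℕ) (y : V₁) : ip₂ (U ((Fs₁ ^ n) v₁)) (U y) = ip₁ ((Fs₁ ^ n) v₁) y := by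
    induction n generalizing y with
    | zero => simpa using hv y
    | succ n ih =>
      rw [Module.End.pow_succ_apply, hUFs, ← h₂.inner_F_right, ← hUF, ih, h₁.inner_F_right]
  have hy := LinearMap.ext_on_range hspan (f := h₂.innerRight (U y) ∘ₗ U) (g := h₁.innerRight y)
    fun n => by
      simp only [LinearMap.comp_apply, IsAdmRep.innerRight_apply]
      rw [← h₁.conj_inner, ← h₂.conj_inner, he]
  rw [← h₁.conj_inner, ← h₂.conj_inner]
  exact congrArg _ (LinearMap.congr_fun hy x)

namespace IsLowestWeightVector

theorem exists_intertwining_equiv_of_inner_self_eq (hq0 : 0 < q) (hq1 : q < 1)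
    (h₁ : IsAdmRep q V₁ ip₁ K₁ Kinv₁ F₁ Fs₁) (h₂ : IsAdmRep q V₂ ip₂ K₂ Kinv₂ F₂ Fs₂)
    {m : ℝ} {v₁ : V₁} {v₂ : V₂} (hv₁ : IsLowestWeightVector K₁ F₁ m v₁)
    (hv₂ : IsLowestWeightVector K₂ F₂ m v₂) (hnorm : ip₂ v₂ v₂ = ip₁ v₁ v₁) :
    ∃ U : V₁ ≃ₗ[ℂ] V₂,
      (∀ v, U (K₁ v) = K₂ (U v)) ∧ (∀ v, U (F₁ v) = F₂ (U v)) ∧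
      (∀ v, U (Fs₁ v) = Fs₂ (U v)) ∧ (∀ v w, ip₂ (U v) (U w) = ip₁ v w) := by
  set U := (hv₁.basis hq0 hq1 h₁).equiv (hv₂.basis hq0 hq1 h₂) (Equiv.refl ℕ)
  have hU (n : ℕ) : U ((Fs₁ ^ n) v₁) = (Fs₂ ^ n) v₂ := by
    rw [← hv₁.basis_apply hq0 hq1 h₁, Module.Basis.equiv_apply, Equiv.refl_apply,
      hv₂.basis_apply]
  have hspan := hv₁.span_pow_Fs_apply_eq_top hq0 hq1 h₁
  have intertwines {T₁ : V₁ →ₗ[ℂ] V₁} {T₂ : V₂ →ₗ[ℂ] V₂}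
      (hT : ∀ n : ℕ, U (T₁ ((Fs₁ ^ n) v₁)) = T₂ ((Fs₂ ^ n) v₂)) (x : V₁) :
      U (T₁ x) = T₂ (U x) :=
    LinearMap.congr_fun (LinearMap.ext_on_range hspan (f := U.toLinearMap ∘ₗ T₁)
      (g := T₂ ∘ₗ U.toLinearMap) fun n => by simp [hT, hU]) x
  have hUK := intertwines fun n => by
    rw [h₁.K_pow_Fs_apply hv₁.K_eq_smul, h₂.K_pow_Fs_apply hv₂.K_eq_smul, map_smul, hU]
  have hUF := intertwines fun n => by
    rw [hv₁.F_pow_Fs_apply hq0.ne' h₁, hv₂.F_pow_Fs_apply hq0.ne' h₂, map_smul, hU]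
  have hUFs := intertwines fun n => by
    rw [← Module.End.pow_succ_apply, ← Module.End.pow_succ_apply, hU]
  refine ⟨U, hUK, hUF, hUFs,
    inner_map_map_of_intertwines h₁ h₂ hspan hv₁.F_eq_zero U.toLinearMap hUF hUFs ?_⟩
  simpa using (hU 0).symm ▸ hnorm

theorem exists_intertwining_equiv (hq0 : 0 < q) (hq1 : q < 1)
    (h₁ : IsAdmRep q V₁ ip₁ K₁ Kinv₁ F₁ Fs₁) (h₂ : IsAdmRep q V₂ ip₂ K₂ Kinv₂ F₂ Fs₂)
    {μ : ℂ} {v₁ : V₁} {v₂ : V₂} (hv₁ : IsLowestWeightVector K₁ F₁ μ v₁)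
    (hv₂ : IsLowestWeightVector K₂ F₂ μ v₂) :
    ∃ U : V₁ ≃ₗ[ℂ] V₂,
      (∀ v, U (K₁ v) = K₂ (U v)) ∧ (∀ v, U (F₁ v) = F₂ (U v)) ∧
      (∀ v, U (Fs₁ v) = Fs₂ (U v)) ∧ (∀ v w, ip₂ (U v) (U w) = ip₁ v w) := by
  obtain ⟨m, rfl⟩ : ∃ m : ℝ, (m : ℂ) = μ :=
    ⟨_, h₁.ofReal_re_eigenvalue hv₁.ne_zero hv₁.K_eq_smul⟩
  obtain ⟨c, hc, hcv⟩ :=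
    h₂.exists_smul_inner_self_eq hv₂.ne_zero (h₁.inner_self_re_pos hv₁.ne_zero)
  exact exists_intertwining_equiv_of_inner_self_eq hq0 hq1 h₁ h₂ hv₁ (hv₂.smul hc)
    (hcv.trans (h₁.ofReal_inner_self_re hv₁.ne_zero))

end IsLowestWeightVector

end Intertwiners

end LowestWeight

/-- In `π_r`, the vector `e_0` is a lowest weight vector: `F e_0 = 0` and
`K e_0 = q^{-r} e_0`.  Moreover every irreducible admissible `*`-representation is
determined up to unitary equivalence by its lowest weight, and distinct lowest weights
`q^{-r₁} ≠ q^{-r₂}` (for `r₁ ≠ r₂`) give inequivalent representations. -/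
theorem lowest_weight_classification (hq0 : 0 < q) (hq1 : q < 1) :
    (∀ r : ℝ, Fop q r (Finsupp.single 0 1) = 0 ∧
      Kop q r (Finsupp.single 0 1) = (((q ^ (-r) : ℝ) : ℂ)) • Finsupp.single 0 1) ∧
    (∀ (V₁ : Type) (_ : AddCommGroup V₁) (_ : Module ℂ V₁)
       (inner₁ : V₁ → V₁ → ℂ) (K₁ Kinv₁ F₁ Fs₁ : V₁ →ₗ[ℂ] V₁)
       (V₂ : Type) (_ : AddCommGroup V₂) (_ : Module ℂ V₂)
       (inner₂ : V₂ → V₂ → ℂ) (K₂ Kinv₂ F₂ Fs₂ : V₂ →ₗ[ℂ] V₂),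
      IsAdmRep q V₁ inner₁ K₁ Kinv₁ F₁ Fs₁ →
      IsAdmRep q V₂ inner₂ K₂ Kinv₂ F₂ Fs₂ →
      ∀ (v₁ : V₁) (v₂ : V₂) (μ : ℂ),
        v₁ ≠ 0 → F₁ v₁ = 0 → K₁ v₁ = μ • v₁ →
        v₂ ≠ 0 → F₂ v₂ = 0 → K₂ v₂ = μ • v₂ →
        ∃ U : V₁ ≃ₗ[ℂ] V₂,
          (∀ v, U (K₁ v) = K₂ (U v)) ∧ (∀ v, U (F₁ v) = F₂ (U v)) ∧
          (∀ v, U (Fs₁ v) = Fs₂ (U v)) ∧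
          (∀ v w, inner₂ (U v) (U w) = inner₁ v w)) ∧
    (∀ (V₁ : Type) (_ : AddCommGroup V₁) (_ : Module ℂ V₁)
       (inner₁ : V₁ → V₁ → ℂ) (K₁ Kinv₁ F₁ Fs₁ : V₁ →ₗ[ℂ] V₁)
       (V₂ : Type) (_ : AddCommGroup V₂) (_ : Module ℂ V₂)
       (inner₂ : V₂ → V₂ → ℂ) (K₂ Kinv₂ F₂ Fs₂ : V₂ →ₗ[ℂ] V₂),
      IsAdmRep q V₁ inner₁ K₁ Kinv₁ F₁ Fs₁ →
      IsAdmRep q V₂ inner₂ K₂ Kinv₂ F₂ Fs₂ →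
      ∀ (v₁ : V₁) (v₂ : V₂) (r₁ r₂ : ℝ), r₁ ≠ r₂ →
        v₁ ≠ 0 → F₁ v₁ = 0 → K₁ v₁ = (((q ^ (-r₁) : ℝ) : ℂ)) • v₁ →
        v₂ ≠ 0 → F₂ v₂ = 0 → K₂ v₂ = (((q ^ (-r₂) : ℝ) : ℂ)) • v₂ →
        ¬∃ U : V₁ ≃ₗ[ℂ] V₂,
          (∀ v, U (K₁ v) = K₂ (U v)) ∧ (∀ v, U (F₁ v) = F₂ (U v)) ∧
          (∀ v, U (Fs₁ v) = Fs₂ (U v)) ∧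
          (∀ v w, inner₂ (U v) (U w) = inner₁ v w)) := by
  refine ⟨fun r => ⟨Fop_single_zero q r, Kop_single_zero q r⟩, ?_, ?_⟩
  · intro V₁ _ _ inner₁ K₁ Kinv₁ F₁ Fs₁ V₂ _ _ inner₂ K₂ Kinv₂ F₂ Fs₂ h₁ h₂ v₁ v₂ μ
      hv₁ hF₁ hK₁ hv₂ hF₂ hK₂
    exact IsLowestWeightVector.exists_intertwining_equiv hq0 hq1 h₁ h₂ ⟨hv₁, hF₁, hK₁⟩
      ⟨hv₂, hF₂, hK₂⟩
  · rintro V₁ _ _ inner₁ K₁ Kinv₁ F₁ Fs₁ V₂ _ _ inner₂ K₂ Kinv₂ F₂ Fs₂ - h₂ v₁ v₂ r₁ r₂ hr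
      hv₁ hF₁ hK₁ hv₂ hF₂ hK₂ ⟨U, hUK, hUF, -, -⟩
    have hweight := (IsLowestWeightVector.map ⟨hv₁, hF₁, hK₁⟩ U hUK hUF).weight_eq hq0 hq1 h₂
      ⟨hv₂, hF₂, hK₂⟩
    exact hr (neg_injective ((Real.rpow_right_inj hq0 hq1.ne).mp
      (Complex.ofReal_injective hweight)))

end
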